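/- arXiv:1202.0411 — 4 statements merged into one kernel-verified Lean document; each statement's English description precedes it below -/
import Mathlib

section
/- In a cartesian differential category, the second derivative satisfies the generalized interchange law: D(D(f)) ∘ ⟨⟨i,h⟩, ⟨g,k⟩⟩ = D(D(f)) ∘ ⟨⟨i,g⟩, ⟨h,k⟩⟩ for all morphisms i, g, h, k with common domain. -/
open CategoryTheory

universe v u

/-- Hom-sets carry a commutative additive monoid structure. -/
class HomAdd (C : Type u) [Category.{v} C] where
  homMonoid : ∀ X Y : C, AddCommMonoid (X ⟶ Y)

attribute [instance] HomAdd.homMonoid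

/-- A morphism is additive if it preserves the additive structure under
precomposition. -/
def IsAdditive {C : Type u} [Category.{v} C] [HomAdd C] {X Y : C} (f : X ⟶ Y) : Prop :=
  (∀ {W : C} (g h : W ⟶ X), (g + h) ≫ f = g ≫ f + h ≫ f) ∧
  (∀ {W : C}, (0 : W ⟶ X) ≫ f = 0)

/-- A cartesian left-additive category: a category with chosen finite products,
hom-sets commutative monoids, composition is left-additive (precomposition
preserves sums), projections are additive, and pairings of additive
morphisms are additive. -/
class CLAC (C : Type u) [Category.{v} C] extends HomAdd C where
  P : C → C → C
  p1 : ∀ {X Y : C}, P X Y ⟶ X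
  p2 : ∀ {X Y : C}, P X Y ⟶ Y
  pair : ∀ {Z X Y : C}, (Z ⟶ X) → (Z ⟶ Y) → (Z ⟶ P X Y)
  pair_fst : ∀ {Z X Y : C} (f : Z ⟶ X) (g : Z ⟶ Y), pair f g ≫ p1 = f
  pair_snd : ∀ {Z X Y : C} (f : Z ⟶ X) (g : Z ⟶ Y), pair f g ≫ p2 = g
  pair_ext : ∀ {Z X Y : C} (h k : Z ⟶ P X Y),
    h ≫ p1 = k ≫ p1 → h ≫ p2 = k ≫ p2 → h = k
  one : C
  bang : ∀ X : C, X ⟶ one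
  bang_unique : ∀ {X : C} (f : X ⟶ one), f = bang X
  comp_add : ∀ {X Y Z : C} (f : X ⟶ Y) (g h : Y ⟶ Z),
    f ≫ (g + h) = f ≫ g + f ≫ h
  comp_zero : ∀ {X Y Z : C} (f : X ⟶ Y), f ≫ (0 : Y ⟶ Z) = 0
  p1_additive : ∀ {X Y : C}, IsAdditive (p1 (X := X) (Y := Y))
  p2_additive : ∀ {X Y : C}, IsAdditive (p2 (X := X) (Y := Y))
  pair_additive : ∀ {Z X Y : C} (f : Z ⟶ X) (g : Z ⟶ Y),
    IsAdditive f → IsAdditive g → IsAdditive (pair f g)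

namespace CLAC

variable {C : Type u} [Category.{v} C] [CLAC C]

/-- The product of two morphisms, `f × g = ⟨f ∘ π₁, g ∘ π₂⟩`. -/
def prodMor {W X Y Z : C} (f : W ⟶ Y) (g : X ⟶ Z) : P W X ⟶ P Y Z :=
  pair (p1 ≫ f) (p2 ≫ g)

end CLAC

open CLAC

/-- A cartesian differential category: a cartesian left-additive category
equipped with a differential operator `D` satisfying axioms D1–D7. -/
class CDC (C : Type u) [Category.{v} C] extends CLAC C where
  D : ∀ {X Y : C}, (X ⟶ Y) → (P X X ⟶ Y)
  D1 : ∀ {X Y : C} (f g : X ⟶ Y), D (f + g) = D f + D g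
  D1' : ∀ {X Y : C}, D (0 : X ⟶ Y) = 0
  D2 : ∀ {W X Y : C} (f : X ⟶ Y) (h k v : W ⟶ X),
    pair (h + k) v ≫ D f = pair h v ≫ D f + pair k v ≫ D f
  D2' : ∀ {W X Y : C} (f : X ⟶ Y) (v : W ⟶ X), pair 0 v ≫ D f = 0
  D3 : ∀ {X : C}, D (𝟙 X) = p1
  D3₁ : ∀ {X Y : C}, D (p1 (X := X) (Y := Y)) = p1 ≫ p1
  D3₂ : ∀ {X Y : C}, D (p2 (X := X) (Y := Y)) = p1 ≫ p2
  D4 : ∀ {Z X Y : C} (f : Z ⟶ X) (g : Z ⟶ Y), D (pair f g) = pair (D f) (D g)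
  D5 : ∀ {X Y Z : C} (g : X ⟶ Y) (f : Y ⟶ Z),
    D (g ≫ f) = pair (D g) (p2 ≫ g) ≫ D f
  D6 : ∀ {W X Y : C} (f : X ⟶ Y) (g h k : W ⟶ X),
    pair (pair g 0) (pair h k) ≫ D (D f) = pair g k ≫ D f
  D7 : ∀ {W X Y : C} (f : X ⟶ Y) (g h k : W ⟶ X),
    pair (pair 0 h) (pair g k) ≫ D (D f) = pair (pair 0 g) (pair h k) ≫ D (D f)

namespace CDC

variable {C : Type u} [Category.{v} C] [CDC C]

/-- The tangent bundle functor on morphisms: `T(f) = ⟨D(f), f ∘ π₂⟩`. -/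
def Tm {X Y : C} (f : X ⟶ Y) : P X X ⟶ P Y Y :=
  pair (D f) (p2 ≫ f)

/-- The unit `η_X = ⟨0, id⟩ : X ⟶ TX`. -/
def η (X : C) : X ⟶ P X X := pair 0 (𝟙 X)

/-- The multiplication `μ_X = ⟨π₂∘π₁ + π₁∘π₂, π₂∘π₂⟩ : TTX ⟶ TX`. -/
def μ (X : C) : P (P X X) (P X X) ⟶ P X X :=
  pair (p1 ≫ p2 + p2 ≫ p1) (p2 ≫ p2)

/-- The (right) tensorial strength `t_{X,Y} = ⟨⟨0, π₁∘π₂⟩, ⟨π₁, π₂∘π₂⟩⟩`. -/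
def t (X Y : C) : P X (P Y Y) ⟶ P (P X Y) (P X Y) :=
  pair (pair 0 (p2 ≫ p1)) (pair p1 (p2 ≫ p2))

/-- The left tensorial strength `t'_{X,Y} = ⟨⟨π₁∘π₁, 0⟩, ⟨π₂∘π₁, π₂⟩⟩`. -/
def t' (X Y : C) : P (P X X) Y ⟶ P (P X Y) (P X Y) :=
  pair (pair (p1 ≫ p1) 0) (pair (p1 ≫ p2) p2)

/-- The distributivity isomorphism
`σ = ⟨⟨π₁∘π₁, π₁∘π₂⟩, ⟨π₂∘π₁, π₂∘π₂⟩⟩ : (A×B)×(E×F) ⟶ (A×E)×(B×F)`. -/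
def Sig (A B E F : C) : P (P A B) (P E F) ⟶ P (P A E) (P B F) :=
  pair (pair (p1 ≫ p1) (p2 ≫ p1)) (pair (p1 ≫ p2) (p2 ≫ p2))

/-- The symmetry `c_{X,Y} = ⟨π₂, π₁⟩`. -/
def symm (X Y : C) : P X Y ⟶ P Y X := pair p2 p1

/-- The left unitor `ℓ_X = ⟨!_X, id⟩ : X ⟶ 1 × X`. -/
def lUnit (X : C) : X ⟶ P one X := pair (bang X) (𝟙 X)

/-- The associator `a_{X,Y,Z} = ⟨π₁∘π₁, ⟨π₂∘π₁, π₂⟩⟩`. -/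
def assoc (X Y Z : C) : P (P X Y) Z ⟶ P X (P Y Z) :=
  pair (p1 ≫ p1) (pair (p1 ≫ p2) p2)

/-- The monoidal structure map `ψ_{X,Y} = ⟨π₁×π₁, π₂×π₂⟩ : TX×TY ⟶ T(X×Y)`. -/
def ψ (X Y : C) : P (P X X) (P Y Y) ⟶ P (P X Y) (P X Y) :=
  pair (prodMor p1 p1) (prodMor p2 p2)

end CDC

open CDC

/-!
Split the point of the second derivative as `⟨i,h⟩ = ⟨i,0⟩ + ⟨0,h⟩` and use additivity (D2) in that
slot. By D6 the `⟨i,0⟩` summand is `D f ∘ ⟨i,k⟩`, independent of `g` and `h`, and by D7 the `⟨0,h⟩`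
summand is symmetric in `g` and `h`.
-/

theorem CLAC.pair_eq_pair_zero_add_pair_zero {C : Type u} [Category.{v} C] [CLAC C] {W X Y : C}
    (a : W ⟶ X) (b : W ⟶ Y) : pair a b = pair a 0 + pair 0 b := by
  apply pair_ext
  · rw [pair_fst, p1_additive.1, pair_fst, pair_fst, add_zero]
  · rw [pair_snd, p2_additive.1, pair_snd, pair_snd, zero_add]

variable {C : Type u} [Category.{v} C] [CDC C]

theorem CDC.pair_pair_comp_D_D_eq_add {W X Y : C} (f : X ⟶ Y) (i g h k : W ⟶ X) :
    pair (pair i h) (pair g k) ≫ D (D f) =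
      pair i k ≫ D f + pair (pair 0 h) (pair g k) ≫ D (D f) := by
  rw [pair_eq_pair_zero_add_pair_zero i h, D2, D6]

/-- Generalized interchange law for the second derivative:
`D(D(f)) ∘ ⟨⟨i,h⟩, ⟨g,k⟩⟩ = D(D(f)) ∘ ⟨⟨i,g⟩, ⟨h,k⟩⟩`. -/
theorem DD_interchange {W X Y : C} (f : X ⟶ Y) (i g h k : W ⟶ X) :
    pair (pair i h) (pair g k) ≫ D (D f) =
      pair (pair i g) (pair h k) ≫ D (D f) := by
  rw [pair_pair_comp_D_D_eq_add f i g h k, pair_pair_comp_D_D_eq_add f i h g k, D7]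
end

section
/- In a cartesian differential category, the assignment T(X) = X×X on objects and T(f) = ⟨D(f), f∘π₂⟩ on morphisms defines a functor T : C → C (i.e., T(id) = id and T(f∘g) = T(f)∘T(g)). -/
open CategoryTheory

universe v u

open CLAC

open CDC

variable {C : Type u} [Category.{v} C] [CDC C]

/-- The tangent bundle construction `T(X) = X×X`, `T(f) = ⟨D(f), f∘π₂⟩` is
functorial: `T(id) = id` and `T(f∘g) = T(f)∘T(g)`. -/
theorem T_functor (X Y Z : C) (g : X ⟶ Y) (f : Y ⟶ Z) :
    Tm (𝟙 X) = 𝟙 (P X X) ∧ Tm (g ≫ f) = Tm g ≫ Tm f := by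
  simp only [Tm]
  constructor
  · apply pair_ext
    · rw [pair_fst, Category.id_comp, D3]
    · rw [pair_snd, Category.id_comp, Category.comp_id]
  · apply pair_ext
    · rw [pair_fst, D5, Category.assoc, pair_fst]
    · rw [pair_snd, Category.assoc, pair_snd]
      simp only [← Category.assoc, pair_snd]
end

section
/- In a cartesian differential category, μ_X = ⟨π₂∘π₁ + π₁∘π₂, π₂∘π₂⟩ : TTX → TX is natural in X: for every f : X → Y, T(f) ∘ μ_X = μ_Y ∘ T(T(f)). -/
open CategoryTheory

universe v u

open CLAC

open CDC

variable {C : Type u} [Category.{v} C] [CDC C]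

/-- `μ_X = ⟨π₂∘π₁ + π₁∘π₂, π₂∘π₂⟩ : TTX ⟶ TX` is natural:
`T(f) ∘ μ_X = μ_Y ∘ T(T(f))`. -/
theorem mu_natural {X Y : C} (f : X ⟶ Y) :
    μ X ≫ Tm f = Tm (Tm f) ≫ μ Y := by
  have hp2 : (p2 : P (P X X) (P X X) ⟶ P X X) = pair (p2 ≫ p1) (p2 ≫ p2) := by
    apply pair_ext <;> simp [pair_fst, pair_snd]
  apply pair_ext
  · rw [Category.assoc, Category.assoc]
    simp only [Tm, μ, pair_fst, comp_add]
    rw [show (pair (p1 ≫ p2 + p2 ≫ p1) (p2 ≫ p2) : P (P X X) (P X X) ⟶ P X X) ≫ D f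
          = pair (p1 ≫ p2) (p2 ≫ p2) ≫ D f + pair (p2 ≫ p1) (p2 ≫ p2) ≫ D f from D2 f _ _ _]
    rw [← hp2]
    rw [D4, D5, D3₂]
    rw [← Category.assoc (pair (pair (D (D f)) (pair (p1 ≫ p2) (p2 ≫ p2) ≫ D f)) (p2 ≫ pair (D f) (p2 ≫ f))) _ p2]
    simp only [pair_snd, pair_fst, Category.assoc]
    rw [← Category.assoc _ p2 p1, pair_snd, Category.assoc, pair_fst, add_comm]
  · rw [Category.assoc, Category.assoc]
    simp only [Tm, μ, pair_snd]
    rw [← Category.assoc, ← Category.assoc, pair_snd, pair_snd, Category.assoc, Category.assoc,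
      pair_snd]
end

section
/- In a cartesian differential category, the triple (T, η, μ) with TX = X×X, T(f) = ⟨D(f), f∘π₂⟩, η_X = ⟨0,id⟩, and μ_X = ⟨π₂∘π₁ + π₁∘π₂, π₂∘π₂⟩ satisfies the monad axioms: μ∘ηT = id, μ∘Tη = id, and μ∘μT = μ∘Tμ. -/
open CategoryTheory

universe v u

open CLAC

open CDC

variable {C : Type u} [Category.{v} C] [CDC C]

section Helpers
variable {C : Type u} [Category.{v} C] [CDC C]

lemma comp_pair {W Z X Y : C} (f : W ⟶ Z) (g : Z ⟶ X) (h : Z ⟶ Y) :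
    f ≫ pair g h = pair (f ≫ g) (f ≫ h) := by
  apply pair_ext <;>
    simp [Category.assoc, pair_fst, pair_snd]

lemma add_comp_p1 {W X Y : C} (g h : W ⟶ P X Y) :
    (g + h) ≫ p1 = g ≫ p1 + h ≫ p1 := p1_additive.1 g h

lemma add_comp_p2 {W X Y : C} (g h : W ⟶ P X Y) :
    (g + h) ≫ p2 = g ≫ p2 + h ≫ p2 := p2_additive.1 g h

lemma zero_comp_p1 {W X Y : C} : (0 : W ⟶ P X Y) ≫ p1 = 0 := p1_additive.2
lemma zero_comp_p2 {W X Y : C} : (0 : W ⟶ P X Y) ≫ p2 = 0 := p2_additive.2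

lemma pair_fst_assoc {Z X Y W : C} (f : Z ⟶ X) (g : Z ⟶ Y) (h : X ⟶ W) :
    pair f g ≫ p1 ≫ h = f ≫ h := by rw [← Category.assoc, pair_fst]

lemma pair_snd_assoc {Z X Y W : C} (f : Z ⟶ X) (g : Z ⟶ Y) (h : Y ⟶ W) :
    pair f g ≫ p2 ≫ h = g ≫ h := by rw [← Category.assoc, pair_snd]

end Helpers

/-- `(T, η, μ)` satisfies the monad axioms:
`μ∘ηT = id`, `μ∘Tη = id`, `μ∘μT = μ∘Tμ`. -/
theorem T_monad (X : C) :
    η (P X X) ≫ μ X = 𝟙 (P X X) ∧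
    Tm (η X) ≫ μ X = 𝟙 (P X X) ∧
    μ (P X X) ≫ μ X = Tm (μ X) ≫ μ X := by
  refine ⟨?_, ?_, ?_⟩
  · apply pair_ext <;>
      simp [η, μ, comp_pair, comp_add, Category.assoc, pair_fst, pair_snd,
        pair_fst_assoc, pair_snd_assoc, zero_comp_p1, zero_comp_p2,
        CLAC.comp_zero]
  · apply pair_ext <;>
      simp [Tm, D4, D1', D3, η, μ, comp_pair, comp_add, Category.assoc, pair_fst,
        pair_snd, pair_fst_assoc, pair_snd_assoc, zero_comp_p1, zero_comp_p2,
        CLAC.comp_zero]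
  · apply pair_ext <;>
      simp [Tm, μ, D4, D1, D5, D3₁, D3₂, comp_pair, comp_add,
        Category.assoc, pair_fst, pair_snd, pair_fst_assoc, pair_snd_assoc,
        add_comp_p1, add_comp_p2, zero_comp_p1, zero_comp_p2,
        CLAC.comp_zero, add_comm, add_left_comm, add_assoc]
end
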